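/- arXiv:2510.08542 — 2 statements merged into one kernel-verified Lean document; each statement's English description precedes it below -/
import Mathlib

section
/- Quasi-locality of the update matrices: Let H be an n-qubit Hamiltonian with locality k, degree d ≥ 2 and exponential growth parameter g, with 0 < β ≤ 1/(100·g·k·(d+1)). Let x, y ∈ ℝ^n be nonnegative vectors supported on sets X, Y ⊆ [n] respectively, with ‖x‖₁ = ‖y‖₁ = 1. Then for Q̂^{(i)} = Σ_{s>0} Σ_{a∈[m]^s a cluster from i} Σ_{r>0} μ_{a,r}·E_{S_{a,r}} with μ_{a,r} = 22·k·(β^s/(s−1)!)·((d+1)·k·β)^{r−1}, one has yᵀ Q̂^{(i)} x ≤ 150·k·(25·g·k·(d+1)·β)^{max(1, max(dist(i,X), dist(i,Y)) − 1)}. -/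
open scoped BigOperators
open Classical
open scoped ComplexOrder

noncomputable section

/-- Index type for the standard basis of the `n`-qubit Hilbert space `(ℂ²)^{⊗n}`. -/
abbrev QIdx (n : ℕ) := Fin n → Fin 2

/-- Operators (matrices) on the `n`-qubit Hilbert space `(ℂ²)^{⊗n}`. -/
abbrev QMat (n : ℕ) := Matrix (QIdx n) (QIdx n) ℂ

/-- The trace norm (Schatten 1-norm) of a matrix: `‖A‖₁ = tr √(AᴴA)`. -/
noncomputable def traceNorm {I : Type} [Fintype I] [DecidableEq I] (A : Matrix I I ℂ) : ℝ :=
  (((Matrix.posSemidef_conjTranspose_mul_self A).1.eigenvectorUnitary : Matrix I I ℂ) *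
    Matrix.diagonal (fun i => ((Real.sqrt
      ((Matrix.posSemidef_conjTranspose_mul_self A).1.eigenvalues i) : ℝ) : ℂ)) *
    (star ((Matrix.posSemidef_conjTranspose_mul_self A).1.eigenvectorUnitary) :
      Matrix I I ℂ)).trace.re

/-- The operator norm (spectral norm) of a complex matrix. -/
noncomputable def opNorm {I : Type} [Fintype I] [DecidableEq I] (A : Matrix I I ℂ) : ℝ :=
  ‖Matrix.toEuclideanCLM (𝕜 := ℂ) A‖

/-- The partial trace of an `n`-qubit operator over the qubit at site `i`, as an operator
on the remaining qubits. -/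
noncomputable def ptraceSite {n : ℕ} (i : Fin n) (X : QMat n) :
    Matrix ({j : Fin n // j ≠ i} → Fin 2) ({j : Fin n // j ≠ i} → Fin 2) ℂ :=
  fun a b => ∑ s : Fin 2,
    X (fun j => if h : j = i then s else a ⟨j, h⟩) (fun j => if h : j = i then s else b ⟨j, h⟩)

/-- A transport plan for a (traceless Hermitian) operator `X`: a decomposition
`X = Σ_i X_i` into Hermitian matrices with `tr_i(X_i) = 0`. -/
structure IsTransportPlan {n : ℕ} (X : QMat n) (Xs : Fin n → QMat n) : Prop where
  herm : ∀ i, (Xs i).IsHermitian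
  traceless : ∀ i, (Xs i).trace = 0
  sum_eq : ∑ i, Xs i = X
  ptrace_eq : ∀ i, ptraceSite i (Xs i) = 0

/-- The quantum Wasserstein norm of order 1 of De Palma–Marvian–Trevisan–Lloyd. -/
noncomputable def wnorm {n : ℕ} (X : QMat n) : ℝ :=
  sInf {c : ℝ | ∃ Xs : Fin n → QMat n, IsTransportPlan X Xs ∧ c = ∑ i, traceNorm (Xs i) / 2}

/-- A density matrix: positive semidefinite with unit trace. -/
def IsDensity {n : ℕ} (ρ : QMat n) : Prop := ρ.PosSemidef ∧ ρ.trace = 1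

/-- The Dobrushin influence matrix of a map `Φ = Φ₁ + ⋯ + Φ_n`:
`D_{ij} = max { ‖Φ_i(ρ − ϱ)‖_{W1} : ρ, ϱ density matrices with tr_j(ρ − ϱ) = 0 }`. -/
noncomputable def dobrushin {n : ℕ} (Φs : Fin n → (QMat n → QMat n)) :
    Matrix (Fin n) (Fin n) ℝ :=
  fun i j => sSup {w : ℝ | ∃ ρ ϱ : QMat n, IsDensity ρ ∧ IsDensity ϱ ∧
    ptraceSite j (ρ - ϱ) = 0 ∧ w = wnorm (Φs i (ρ - ϱ))}

/-- The `1 → 1` norm of a real matrix: the maximum column `ℓ₁`-norm. -/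
noncomputable def norm11 {n : ℕ} (D : Matrix (Fin n) (Fin n) ℝ) : ℝ :=
  ⨆ j, ∑ i, |D i j|

/-- `Q` is an update matrix for `Φ` if `Φ` maps any transport plan with cost vector `x`
to a transport plan with cost vector entrywise at most `Q x`. -/
def IsUpdateMatrix {n : ℕ} (Q : Matrix (Fin n) (Fin n) ℝ) (Φ : QMat n → QMat n) : Prop :=
  ∀ (X : QMat n) (Xs : Fin n → QMat n), IsTransportPlan X Xs →
    ∃ Ys : Fin n → QMat n, IsTransportPlan (Φ X) Ys ∧
      ∀ j, traceNorm (Ys j) / 2 ≤ Q.mulVec (fun i => traceNorm (Xs i) / 2) j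

/-! ### Hamiltonian combinatorics -/

/-- `M` is supported on the set of qubits `S` (i.e. `M = M_S ⊗ Id`). -/
def SupportedOn {n : ℕ} (S : Finset (Fin n)) (M : QMat n) : Prop :=
  (∀ a b : QIdx n, (∃ j, j ∉ S ∧ a j ≠ b j) → M a b = 0) ∧
  (∀ a b a' b' : QIdx n, (∀ j ∈ S, a j = a' j) → (∀ j ∈ S, b j = b' j) →
     (∀ j ∉ S, a j = b j) → (∀ j ∉ S, a' j = b' j) → M a b = M a' b')

/-- The support of an operator: the minimal set of qubits on which it acts nontrivially. -/
noncomputable def supp {n : ℕ} (M : QMat n) : Finset (Fin n) :=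
  (Finset.univ.filter fun S : Finset (Fin n) => SupportedOn S M).inf id

/-- The interaction graph of a local Hamiltonian: two distinct sites are adjacent iff
some term's support contains both. -/
def interGraph {n m : ℕ} (Hterm : Fin m → QMat n) : SimpleGraph (Fin n) where
  Adj i j := i ≠ j ∧ ∃ a, i ∈ supp (Hterm a) ∧ j ∈ supp (Hterm a)
  symm := ⟨by
    rintro i j ⟨hij, a, hi, hj⟩
    exact ⟨hij.symm, a, hj, hi⟩⟩
  loopless := ⟨by
    rintro i ⟨hii, -⟩
    exact hii rfl⟩

/-- The graph distance on sites induced by the interaction hypergraph. -/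
noncomputable def hamDist {n m : ℕ} (Hterm : Fin m → QMat n) (i j : Fin n) : ℕ :=
  (interGraph Hterm).dist i j

/-- The ball of radius `r` around site `i` in the interaction graph distance. -/
noncomputable def ballH {n m : ℕ} (Hterm : Fin m → QMat n) (i : Fin n) (r : ℕ) :
    Finset (Fin n) :=
  Finset.univ.filter fun j => hamDist Hterm i j ≤ r

/-- Distance from a site to a set of sites. -/
noncomputable def distToSet {n m : ℕ} (Hterm : Fin m → QMat n) (j : Fin n)
    (S : Finset (Fin n)) : ℕ :=
  sInf {r : ℕ | ∃ i ∈ S, hamDist Hterm j i = r}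

/-- Distance between two sets of sites. -/
noncomputable def setDist {n m : ℕ} (Hterm : Fin m → QMat n) (S T : Finset (Fin n)) : ℕ :=
  sInf {r : ℕ | ∃ i ∈ S, ∃ j ∈ T, hamDist Hterm i j = r}

/-- For `S ⊆ [n]`, the real matrix `E_S` with `(E_S)_{uv} = 1` iff `u, v ∈ S`. -/
def ESet {n : ℕ} (S : Finset (Fin n)) : Matrix (Fin n) (Fin n) ℝ :=
  fun u v => if u ∈ S ∧ v ∈ S then 1 else 0

/-- `S_a`: the union of the supports of the terms appearing in the sequence `a`. -/
noncomputable def SOf {n m : ℕ} (Hterm : Fin m → QMat n) {s : ℕ} (a : Fin s → Fin m) :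
    Finset (Fin n) :=
  Finset.univ.biUnion fun ℓ => supp (Hterm (a ℓ))

/-- `a` is a cluster from the set `S₀`: each term's support intersects `S₀` together with
the supports of the previous terms. -/
def IsClusterFrom {n m : ℕ} (Hterm : Fin m → QMat n) (S0 : Finset (Fin n)) {s : ℕ}
    (a : Fin s → Fin m) : Prop :=
  ∀ ℓ : Fin s, ∃ j ∈ supp (Hterm (a ℓ)),
    j ∈ S0 ∨ ∃ p : Fin s, p < ℓ ∧ j ∈ supp (Hterm (a p))

/-- The ball of radius `r` around a set of sites. -/
noncomputable def ballOfSet {n m : ℕ} (Hterm : Fin m → QMat n) (S : Finset (Fin n)) (r : ℕ) :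
    Finset (Fin n) :=
  Finset.univ.filter fun j => distToSet Hterm j S ≤ r

/-! ### Matrix exponentials, Gibbs states, and the balanced Lindbladian -/

/-- The matrix exponential, via its power series. -/
noncomputable def mexp {I : Type} [Fintype I] [DecidableEq I] (A : Matrix I I ℂ) :
    Matrix I I ℂ :=
  ∑' k : ℕ, ((k.factorial : ℂ)⁻¹ • A ^ k)

/-- The Gibbs state `σ = e^{−βH} / tr(e^{−βH})` at inverse temperature `β`. -/
noncomputable def gibbs {I : Type} [Fintype I] [DecidableEq I] (β : ℝ) (H : Matrix I I ℂ) :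
    Matrix I I ℂ :=
  (mexp ((-β : ℂ) • H)).trace⁻¹ • mexp ((-β : ℂ) • H)

/-- The real power `A^r` of a Hermitian matrix, via its spectral decomposition. -/
noncomputable def hermPow {I : Type} [Fintype I] [DecidableEq I] (A : Matrix I I ℂ) (r : ℝ) :
    Matrix I I ℂ :=
  if h : A.IsHermitian then
    (h.eigenvectorUnitary : Matrix I I ℂ) *
      Matrix.diagonal (fun i => ((h.eigenvalues i ^ r : ℝ) : ℂ)) *
      star (h.eigenvectorUnitary : Matrix I I ℂ)
  else 0

/-- The coherent term `G^P` of the balanced Lindbladian, defined in the eigenbasis of `σ`. -/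
noncomputable def coherentG {I : Type} [Fintype I] [DecidableEq I] (σ P : Matrix I I ℂ) :
    Matrix I I ℂ :=
  if h : σ.IsHermitian then
    let U : Matrix I I ℂ := h.eigenvectorUnitary
    let lam : I → ℝ := h.eigenvalues
    let P' : Matrix I I ℂ := star U * P * U
    let w : I → I → ℝ := fun i j =>
      (lam i ^ ((1:ℝ)/2) - lam j ^ ((1:ℝ)/2)) /
        (2 * lam i ^ ((1:ℝ)/4) * lam j ^ ((1:ℝ)/4) *
          (lam i ^ ((1:ℝ)/2) + lam j ^ ((1:ℝ)/2)))
    let G' : Matrix I I ℂ := Matrix.of (fun i j =>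
      (-Complex.I) * ((w i j : ℝ) : ℂ) *
        (∑ t, ((lam t ^ ((1:ℝ)/2) : ℝ) : ℂ) * P' i t * P' t j))
    U * G' * star U
  else 0

/-- The jump operator `A^P = σ^{1/4} P σ^{−1/4}`. -/
noncomputable def jumpA {I : Type} [Fintype I] [DecidableEq I] (σ P : Matrix I I ℂ) :
    Matrix I I ℂ :=
  hermPow σ ((1:ℝ)/4) * P * hermPow σ (-((1:ℝ)/4))

/-- The Lindblad generator `ρ ↦ −i[G,ρ] + AρA† − ½{A†A, ρ}` as a linear endomorphism. -/
noncomputable def lindbladOp {I : Type} [Fintype I] [DecidableEq I] (G A : Matrix I I ℂ) :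
    Module.End ℂ (Matrix I I ℂ) :=
  (-Complex.I) • (LinearMap.mulLeft ℂ G - LinearMap.mulRight ℂ G)
    + (LinearMap.mulRight ℂ (star A)) ∘ₗ (LinearMap.mulLeft ℂ A)
    - ((1:ℂ)/2) • (LinearMap.mulLeft ℂ (star A * A) + LinearMap.mulRight ℂ (star A * A))

/-- The balanced Lindbladian `L^P` for jump `P` with invariant state `σ`. -/
noncomputable def LP {I : Type} [Fintype I] [DecidableEq I] (σ P : Matrix I I ℂ) :
    Module.End ℂ (Matrix I I ℂ) :=
  lindbladOp (coherentG σ P) (jumpA σ P)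

/-- The three nonidentity single-qubit Pauli matrices. -/
noncomputable def pauli1 : Fin 3 → Matrix (Fin 2) (Fin 2) ℂ :=
  ![!![0, 1; 1, 0], !![0, -Complex.I; Complex.I, 0], !![1, 0; 0, -1]]

/-- The Pauli matrix `σ_p` acting at site `j` of an `n`-qubit system. -/
noncomputable def pauliAt {n : ℕ} (j : Fin n) (p : Fin 3) : QMat n :=
  fun a b => (if ∀ l, l ≠ j → a l = b l then 1 else 0) * pauli1 p (a j) (b j)

/-- The site-`j` balanced Lindbladian `L_j* = Σ_{P ∈ P_j} L^P`. -/
noncomputable def siteL {n : ℕ} (σ : QMat n) (j : Fin n) : Module.End ℂ (QMat n) :=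
  ∑ p : Fin 3, LP σ (pauliAt j p)

/-- The balanced Lindbladian `L* = Σ_j L_j*`. -/
noncomputable def fullL {n : ℕ} (σ : QMat n) : Module.End ℂ (QMat n) :=
  ∑ j, siteL σ j

/-- The quantum dynamical semigroup `e^{L}` generated by a Lindbladian, applied to a state. -/
noncomputable def superExp {n : ℕ} (L : Module.End ℂ (QMat n)) (ρ : QMat n) : QMat n :=
  ∑' k : ℕ, ((k.factorial : ℂ)⁻¹ • (L ^ k) ρ)

/-! ### Entropic quantities -/

/-- The von Neumann entropy `S(ρ) = −tr(ρ log ρ)` of a (Hermitian) matrix. -/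
noncomputable def vnEntropy {I : Type} [Fintype I] [DecidableEq I] (ρ : Matrix I I ℂ) : ℝ :=
  if h : ρ.IsHermitian then -∑ i, h.eigenvalues i * Real.log (h.eigenvalues i) else 0

/-- The reduced operator on the subsystem `S`: the partial trace over the complement of `S`. -/
noncomputable def reduceTo {n : ℕ} (S : Finset (Fin n)) (X : QMat n) :
    Matrix ({j : Fin n // j ∈ S} → Fin 2) ({j : Fin n // j ∈ S} → Fin 2) ℂ :=
  fun a b => ∑ c : {j : Fin n // j ∉ S} → Fin 2,
    X (fun j => if h : j ∈ S then a ⟨j, h⟩ else c ⟨j, h⟩)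
      (fun j => if h : j ∈ S then b ⟨j, h⟩ else c ⟨j, h⟩)

/-- The quasi-local part `Q̂⁽ⁱ⁾` of the Wasserstein update matrix of the site-`i`
Lindblad step, with coefficients `μ_{a,r} = 22 k (β^s/(s−1)!) ((d+1)kβ)^{r−1}`. -/
noncomputable def Qhat {n m : ℕ} (Hterm : Fin m → QMat n) (k d : ℕ) (β : ℝ) (i : Fin n) :
    Matrix (Fin n) (Fin n) ℝ :=
  ∑' s : ℕ, ∑' r : ℕ, ∑ a : Fin (s + 1) → Fin m,
    (if IsClusterFrom Hterm {i} a then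
        22 * (k : ℝ) * (β ^ (s + 1) / (Nat.factorial s : ℝ)) * (((d : ℝ) + 1) * k * β) ^ r
      else 0) • ESet (ballOfSet Hterm (SOf Hterm a) (r + 1))

/-!
A cluster `a` from `i` of length `s + 1` is connected through `i`, so `S_a` lies within
distance `s + 1` of `i` and the matrix `E_{S_{a,r+1}}` only has entries `(u, v)` with
`u, v` within distance `s + r + 2` of `i`. Building clusters one term at a time, each new
term must meet `{i}` or one of the previous supports, so there are at most `(s+1)! d^{s+1}`
clusters; this cancels the `1/s!` in `μ_{a,r}`. With `α = g k (d+1) β ≤ 1/100` the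
`(s, r)`-contribution to the entry `(u, v)` is at most `22 k (2α)^{s+1+r}`, and it vanishes
unless `s + 1 + r ≥ e(u, v) := max(1, max(dist(i,u), dist(i,v)) − 1)`; summing the two
geometric series bounds that entry of `Q̂⁽ⁱ⁾` by `44 k (4α)^{e(u, v)}`.
Since `‖x‖₁ = ‖y‖₁ = 1`, `yᵀ Q̂⁽ⁱ⁾ x` is at most the largest entry over `Y × X`.
-/

theorem Matrix.dotProduct_mulVec_le_of_abs_apply_le {ι κ : Type*} [Fintype ι] [Fintype κ]
    (Q : Matrix ι κ ℝ) (y : ι → ℝ) (x : κ → ℝ) {R : ℝ}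
    (hQ : ∀ u v, y u ≠ 0 → x v ≠ 0 → |Q u v| ≤ R) :
    dotProduct y (Q.mulVec x) ≤ R * ((∑ u, |y u|) * ∑ v, |x v|) := by
  have hterm : ∀ u v, y u * (Q u v * x v) ≤ R * (|y u| * |x v|) := by
    intro u v
    by_cases hy : y u = 0
    · simp [hy]
    by_cases hx : x v = 0
    · simp [hx]
    calc y u * (Q u v * x v) ≤ |y u * (Q u v * x v)| := le_abs_self _
      _ = |Q u v| * (|y u| * |x v|) := by rw [abs_mul, abs_mul]; ring
      _ ≤ R * (|y u| * |x v|) := by gcongr; exact hQ u v hy hx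
  calc dotProduct y (Q.mulVec x) = ∑ u, ∑ v, y u * (Q u v * x v) := by
        simp only [dotProduct, Matrix.mulVec, Finset.mul_sum]
    _ ≤ ∑ u, ∑ v, R * (|y u| * |x v|) :=
        Finset.sum_le_sum fun u _ => Finset.sum_le_sum fun v _ => hterm u v
    _ = R * ((∑ u, |y u|) * ∑ v, |x v|) := by
        rw [Finset.sum_mul_sum, Finset.mul_sum]
        simp only [Finset.mul_sum]

theorem Matrix.tsum_apply_nonneg_and_le {ι κ : Type*} {f : ℕ → Matrix ι κ ℝ}
    {b : ι → κ → ℕ → ℝ} (hf : ∀ s u v, 0 ≤ f s u v) (hfb : ∀ s u v, f s u v ≤ b u v s)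
    (hb : ∀ u v, Summable (b u v)) (u : ι) (v : κ) :
    0 ≤ (∑' s, f s) u v ∧ (∑' s, f s) u v ≤ ∑' s, b u v s := by
  have hsum : ∀ u v, Summable fun s => f s u v := fun u v =>
    (hb u v).of_nonneg_of_le (hf · u v) (hfb · u v)
  have hf_sum : Summable f := Pi.summable.2 fun u => Pi.summable.2 fun v => hsum u v
  have happly : (∑' s, f s) u v = ∑' s, f s u v :=
    (congrFun (tsum_apply hf_sum) v).trans (tsum_apply (Pi.summable.1 hf_sum u))
  rw [happly]
  exact ⟨tsum_nonneg (hf · u v), (hsum u v).tsum_le_tsum (hfb · u v) (hb u v)⟩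

section Geometry

variable {n m : ℕ} {Hterm : Fin m → QMat n}

theorem interGraph_edist_le_one {b : Fin m} {j j' : Fin n} (hj : j ∈ supp (Hterm b))
    (hj' : j' ∈ supp (Hterm b)) : (interGraph Hterm).edist j j' ≤ 1 := by
  rw [SimpleGraph.edist_le_one_iff_adj_or_eq]
  by_cases h : j = j'
  · exact Or.inr h
  · exact Or.inl ⟨h, b, hj, hj'⟩

theorem distToSet_le_hamDist {i j : Fin n} {S : Finset (Fin n)} (hj : j ∈ S) :
    distToSet Hterm i S ≤ hamDist Hterm i j :=
  Nat.sInf_le ⟨j, hj, rfl⟩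

namespace IsClusterFrom

variable {i : Fin n}

theorem edist_le {s : ℕ} {a : Fin s → Fin m} (h : IsClusterFrom Hterm {i} a) (ℓ : Fin s)
    {j : Fin n} (hj : j ∈ supp (Hterm (a ℓ))) : (interGraph Hterm).edist i j ≤ ℓ + 1 := by
  induction ℓ using WellFoundedLT.induction generalizing j with
  | _ ℓ ih =>
    obtain ⟨j', hj', hj'i | ⟨p, hpℓ, hj'p⟩⟩ := h ℓ
    · rw [Finset.mem_singleton.1 hj'i] at hj'
      exact (interGraph_edist_le_one hj' hj).trans le_add_self
    · have hpℓ' : (p : ℕ) + 1 ≤ ℓ := hpℓ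
      calc (interGraph Hterm).edist i j
          ≤ (interGraph Hterm).edist i j' + (interGraph Hterm).edist j' j :=
            SimpleGraph.edist_triangle
        _ ≤ (p + 1 : ℕ∞) + 1 := add_le_add (ih p hpℓ hj'p) (interGraph_edist_le_one hj' hj)
        _ ≤ ℓ + 1 := by gcongr; exact_mod_cast hpℓ'

theorem edist_le_of_mem_SOf {s : ℕ} {a : Fin s → Fin m} (h : IsClusterFrom Hterm {i} a)
    {j : Fin n} (hj : j ∈ SOf Hterm a) : (interGraph Hterm).edist i j ≤ s := by
  obtain ⟨ℓ, -, hjℓ⟩ := Finset.mem_biUnion.1 hj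
  calc (interGraph Hterm).edist i j ≤ ℓ + 1 := h.edist_le ℓ hjℓ
    _ ≤ s := by exact_mod_cast ℓ.isLt

theorem mem_SOf {s : ℕ} {a : Fin (s + 1) → Fin m} (h : IsClusterFrom Hterm {i} a) :
    i ∈ SOf Hterm a := by
  obtain ⟨j, hj, hji | ⟨p, hp, -⟩⟩ := h 0
  · rw [Finset.mem_singleton.1 hji] at hj
    exact Finset.mem_biUnion.2 ⟨0, Finset.mem_univ _, hj⟩
  · exact absurd hp (Fin.not_lt_zero p)

theorem hamDist_le_of_mem_ballOfSet {s R : ℕ} {a : Fin (s + 1) → Fin m}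
    (h : IsClusterFrom Hterm {i} a) {u : Fin n} (hu : u ∈ ballOfSet Hterm (SOf Hterm a) R) :
    hamDist Hterm i u ≤ s + 1 + R := by
  obtain ⟨j, hj, hju⟩ := Nat.sInf_mem (s := {r | ∃ j ∈ SOf Hterm a, hamDist Hterm u j = r})
    ⟨_, i, h.mem_SOf, rfl⟩
  have hij := h.edist_le_of_mem_SOf hj
  have hreach : (interGraph Hterm).Reachable i j :=
    SimpleGraph.edist_ne_top_iff_reachable.1 (ne_top_of_le_ne_top (by simp) hij)
  have hij' : (interGraph Hterm).dist i j ≤ s + 1 := by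
    rw [← hreach.coe_dist_eq_edist] at hij
    exact_mod_cast hij
  have hju' : (interGraph Hterm).dist j u ≤ R := by
    rw [SimpleGraph.dist_comm]
    exact hju.trans_le (Finset.mem_filter.1 hu).2
  exact (hreach.dist_triangle_left u).trans (add_le_add hij' hju')

end IsClusterFrom

end Geometry

section Counting

variable {n m : ℕ} (Hterm : Fin m → QMat n)

def termsMeeting (S : Finset (Fin n)) : Finset (Fin m) :=
  Finset.univ.filter fun b => (supp (Hterm b) ∩ S).Nonempty

def clustersFrom (i : Fin n) (s : ℕ) : Finset (Fin s → Fin m) :=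
  Finset.univ.filter fun a => IsClusterFrom Hterm {i} a

variable {Hterm}

theorem termsMeeting_mono {S T : Finset (Fin n)} (hST : S ⊆ T) :
    termsMeeting Hterm S ⊆ termsMeeting Hterm T := fun _ hb =>
  Finset.mem_filter.2 ⟨Finset.mem_univ _,
    (Finset.mem_filter.1 hb).2.mono (Finset.inter_subset_inter_left hST)⟩

theorem termsMeeting_union (S T : Finset (Fin n)) :
    termsMeeting Hterm (S ∪ T) = termsMeeting Hterm S ∪ termsMeeting Hterm T := by
  ext b
  simp [termsMeeting, Finset.inter_union_distrib_left, Finset.union_nonempty]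

variable {d : ℕ} (hdeg : ∀ a, (termsMeeting Hterm (supp (Hterm a))).card ≤ d)
include hdeg

theorem card_termsMeeting_singleton_le (i : Fin n) : (termsMeeting Hterm {i}).card ≤ d := by
  obtain h | ⟨b, hb⟩ := (termsMeeting Hterm {i}).eq_empty_or_nonempty
  · simp [h]
  have hib : {i} ⊆ supp (Hterm b) := by
    obtain ⟨j, hj⟩ := (Finset.mem_filter.1 hb).2
    rw [Finset.mem_inter, Finset.mem_singleton] at hj
    exact Finset.singleton_subset_iff.2 (hj.2 ▸ hj.1)
  exact (Finset.card_le_card (termsMeeting_mono hib)).trans (hdeg b)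

theorem card_termsMeeting_SOf_le {s : ℕ} (p : Fin s → Fin m) :
    (termsMeeting Hterm (SOf Hterm p)).card ≤ s * d := by
  have hsub : termsMeeting Hterm (SOf Hterm p) ⊆
      Finset.univ.biUnion fun ℓ => termsMeeting Hterm (supp (Hterm (p ℓ))) := by
    intro b hb
    obtain ⟨j, hj⟩ := (Finset.mem_filter.1 hb).2
    obtain ⟨hjb, hjp⟩ := Finset.mem_inter.1 hj
    obtain ⟨ℓ, -, hjℓ⟩ := Finset.mem_biUnion.1 hjp
    exact Finset.mem_biUnion.2 ⟨ℓ, Finset.mem_univ _,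
      Finset.mem_filter.2 ⟨Finset.mem_univ _, j, Finset.mem_inter.2 ⟨hjb, hjℓ⟩⟩⟩
  calc (termsMeeting Hterm (SOf Hterm p)).card
      ≤ ∑ ℓ, (termsMeeting Hterm (supp (Hterm (p ℓ)))).card :=
        (Finset.card_le_card hsub).trans Finset.card_biUnion_le
    _ ≤ ∑ _ℓ : Fin s, d := Finset.sum_le_sum fun ℓ _ => hdeg (p ℓ)
    _ = s * d := by simp

omit hdeg

namespace IsClusterFrom

variable {S0 : Finset (Fin n)} {s : ℕ} {a : Fin (s + 1) → Fin m}

theorem init (h : IsClusterFrom Hterm S0 a) : IsClusterFrom Hterm S0 (Fin.init a) := by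
  intro ℓ
  obtain ⟨j, hj, hjS0 | ⟨p, hp, hjp⟩⟩ := h ℓ.castSucc
  · exact ⟨j, hj, Or.inl hjS0⟩
  · have hp_ne : p ≠ Fin.last s := Fin.ne_last_of_lt (hp.trans (Fin.castSucc_lt_last ℓ))
    refine ⟨j, hj, Or.inr ⟨p.castPred hp_ne, ?_, ?_⟩⟩
    · rwa [← Fin.castSucc_lt_castSucc_iff, Fin.castSucc_castPred]
    · simpa [Fin.init] using hjp

theorem last_mem_termsMeeting (h : IsClusterFrom Hterm S0 a) :
    a (Fin.last s) ∈ termsMeeting Hterm (S0 ∪ SOf Hterm (Fin.init a)) := by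
  obtain ⟨j, hj, hjS | hjp⟩ := h (Fin.last s)
  · exact Finset.mem_filter.2 ⟨Finset.mem_univ _, j,
      Finset.mem_inter.2 ⟨hj, Finset.mem_union_left _ hjS⟩⟩
  · obtain ⟨p, hp, hjp⟩ := hjp
    have hjSOf : j ∈ SOf Hterm (Fin.init a) := Finset.mem_biUnion.2
      ⟨p.castPred (Fin.ne_last_of_lt hp), Finset.mem_univ _, by simpa [Fin.init] using hjp⟩
    exact Finset.mem_filter.2 ⟨Finset.mem_univ _, j,
      Finset.mem_inter.2 ⟨hj, Finset.mem_union_right _ hjSOf⟩⟩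

end IsClusterFrom

theorem clustersFrom_succ_subset (i : Fin n) (s : ℕ) :
    clustersFrom Hterm i (s + 1) ⊆ (clustersFrom Hterm i s).biUnion fun p =>
      (termsMeeting Hterm ({i} ∪ SOf Hterm p)).image (Fin.snoc (α := fun _ => Fin m) p) := by
  intro a ha
  have ha := (Finset.mem_filter.1 ha).2
  exact Finset.mem_biUnion.2 ⟨Fin.init a, Finset.mem_filter.2 ⟨Finset.mem_univ _, ha.init⟩,
    Finset.mem_image.2 ⟨_, ha.last_mem_termsMeeting, Fin.snoc_init_self a⟩⟩

include hdeg in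
theorem card_clustersFrom_le (i : Fin n) (s : ℕ) :
    (clustersFrom Hterm i s).card ≤ s.factorial * d ^ s := by
  induction s with
  | zero => exact (Finset.card_filter_le _ _).trans (by simp)
  | succ s ih =>
    have hext : ∀ p : Fin s → Fin m,
        (termsMeeting Hterm ({i} ∪ SOf Hterm p)).card ≤ (s + 1) * d := by
      intro p
      have h1 := card_termsMeeting_singleton_le hdeg i
      have h2 := card_termsMeeting_SOf_le hdeg p
      rw [termsMeeting_union]
      exact (Finset.card_union_le _ _).trans (by rw [add_one_mul]; omega)
    calc (clustersFrom Hterm i (s + 1)).card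
        ≤ ∑ p ∈ clustersFrom Hterm i s, (termsMeeting Hterm ({i} ∪ SOf Hterm p)).card :=
          (Finset.card_le_card (clustersFrom_succ_subset i s)).trans <|
            Finset.card_biUnion_le.trans <| Finset.sum_le_sum fun _ _ => Finset.card_image_le
      _ ≤ (clustersFrom Hterm i s).card * ((s + 1) * d) := by
          simpa using Finset.sum_le_card_nsmul _ _ _ fun p _ => hext p
      _ ≤ s.factorial * d ^ s * ((s + 1) * d) := Nat.mul_le_mul_right _ ih
      _ = (s + 1).factorial * d ^ (s + 1) := by rw [Nat.factorial_succ, pow_succ]; ring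

end Counting

section Bounds

/-- The coefficient `μ_{a,r+1}` of a cluster `a` of length `s + 1`. -/
def clusterCoeff (k d : ℕ) (β : ℝ) (s r : ℕ) : ℝ :=
  22 * (k : ℝ) * (β ^ (s + 1) / (Nat.factorial s : ℝ)) * (((d : ℝ) + 1) * k * β) ^ r

theorem clusterCoeff_nonneg {k d : ℕ} {β : ℝ} (hβ : 0 ≤ β) (s r : ℕ) :
    0 ≤ clusterCoeff k d β s r := by
  unfold clusterCoeff
  positivity

theorem factorial_mul_pow_mul_clusterCoeff_le {k d : ℕ} {β α : ℝ} (hβ : 0 ≤ β)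
    (hdβ : d * β ≤ α) (hkβ : ((d : ℝ) + 1) * k * β ≤ α) (s r : ℕ) :
    ((s + 1).factorial * d ^ (s + 1) : ℝ) * clusterCoeff k d β s r
      ≤ 22 * k * (2 * α) ^ (s + 1 + r) := by
  have hα : 0 ≤ α := le_trans (by positivity) hkβ
  have hs : ((s : ℝ) + 1) ≤ 2 ^ (s + 1) := by exact_mod_cast Nat.lt_two_pow_self.le
  calc ((s + 1).factorial * d ^ (s + 1) : ℝ) * clusterCoeff k d β s r
      = 22 * k * (((s : ℝ) + 1) * (d * β) ^ (s + 1) * (((d : ℝ) + 1) * k * β) ^ r) := by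
        unfold clusterCoeff
        push_cast [Nat.factorial_succ]
        field_simp
        ring
    _ ≤ 22 * k * (2 ^ (s + 1) * α ^ (s + 1) * (2 * α) ^ r) := by
        gcongr 22 * k * (?_ * ?_ ^ (s + 1) * ?_ ^ r)
        linarith
    _ = 22 * k * (2 * α) ^ (s + 1 + r) := by ring

variable {n m : ℕ} (Hterm : Fin m → QMat n) (k d : ℕ) (β : ℝ) (i : Fin n)

def QhatTerm (s r : ℕ) : Matrix (Fin n) (Fin n) ℝ :=
  ∑ a : Fin (s + 1) → Fin m,
    (if IsClusterFrom Hterm {i} a then clusterCoeff k d β s r else 0) •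
      ESet (ballOfSet Hterm (SOf Hterm a) (r + 1))

theorem Qhat_eq_tsum_QhatTerm :
    Qhat Hterm k d β i = ∑' s, ∑' r, QhatTerm Hterm k d β i s r :=
  rfl

variable {Hterm k d β i}

theorem QhatTerm_apply (s r : ℕ) (u v : Fin n) :
    QhatTerm Hterm k d β i s r u v = ∑ a ∈ clustersFrom Hterm i (s + 1),
      clusterCoeff k d β s r * ESet (ballOfSet Hterm (SOf Hterm a) (r + 1)) u v := by
  simp only [QhatTerm, clustersFrom, Matrix.sum_apply, Matrix.smul_apply, smul_eq_mul,
    ite_mul, zero_mul, Finset.sum_filter]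

theorem ESet_apply_nonneg (S : Finset (Fin n)) (u v : Fin n) : 0 ≤ ESet S u v := by
  unfold ESet
  split_ifs <;> norm_num

theorem ESet_apply_le_one (S : Finset (Fin n)) (u v : Fin n) : ESet S u v ≤ 1 := by
  unfold ESet
  split_ifs <;> norm_num

theorem QhatTerm_apply_nonneg (hβ : 0 ≤ β) (s r : ℕ) (u v : Fin n) :
    0 ≤ QhatTerm Hterm k d β i s r u v := by
  rw [QhatTerm_apply]
  exact Finset.sum_nonneg fun a _ =>
    mul_nonneg (clusterCoeff_nonneg hβ s r) (ESet_apply_nonneg _ u v)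

theorem QhatTerm_apply_le_card_mul (hβ : 0 ≤ β) (s r : ℕ) (u v : Fin n) :
    QhatTerm Hterm k d β i s r u v
      ≤ (clustersFrom Hterm i (s + 1)).card * clusterCoeff k d β s r := by
  rw [QhatTerm_apply, ← nsmul_eq_mul]
  exact Finset.sum_le_card_nsmul _ _ _ fun a _ =>
    mul_le_of_le_one_right (clusterCoeff_nonneg hβ s r) (ESet_apply_le_one _ u v)

theorem QhatTerm_apply_eq_zero {s r : ℕ} {u v : Fin n}
    (hfar : s + r + 2 < max (hamDist Hterm i u) (hamDist Hterm i v)) :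
    QhatTerm Hterm k d β i s r u v = 0 := by
  rw [QhatTerm_apply]
  refine Finset.sum_eq_zero fun a ha => ?_
  have hcl := (Finset.mem_filter.1 ha).2
  have hESet : ESet (ballOfSet Hterm (SOf Hterm a) (r + 1)) u v = 0 := by
    refine if_neg fun ⟨hu, hv⟩ => ?_
    have := hcl.hamDist_le_of_mem_ballOfSet hu
    have := hcl.hamDist_le_of_mem_ballOfSet hv
    omega
  rw [hESet, mul_zero]

variable {α : ℝ} (hdeg : ∀ a, (termsMeeting Hterm (supp (Hterm a))).card ≤ d)
  (hβ : 0 ≤ β) (hdβ : d * β ≤ α) (hkβ : ((d : ℝ) + 1) * k * β ≤ α) (hα : 4 * α ≤ 1)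
include hdeg hβ hdβ hkβ hα

/-- Only summands with `s + 1 + r ≥ N` reach the entry `(u, v)`, and those are at most
`22 k (2α)^{s+1+r} = 22 k (4α)^{s+1+r} 2^{-(s+1+r)}`. -/
theorem QhatTerm_apply_le {N : ℕ} {u v : Fin n}
    (hN : N ≤ max 1 (max (hamDist Hterm i u) (hamDist Hterm i v) - 1)) (s r : ℕ) :
    QhatTerm Hterm k d β i s r u v ≤ 11 * k * (4 * α) ^ N * ((1 / 2) ^ s * (1 / 2) ^ r) := by
  have hα0 : 0 ≤ α := le_trans (by positivity) hkβ
  by_cases hfar : s + r + 2 < max (hamDist Hterm i u) (hamDist Hterm i v)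
  · rw [QhatTerm_apply_eq_zero hfar]
    positivity
  have hNsr : N ≤ s + 1 + r := by omega
  have hcard : ((clustersFrom Hterm i (s + 1)).card : ℝ) ≤ (s + 1).factorial * d ^ (s + 1) := by
    exact_mod_cast card_clustersFrom_le hdeg i (s + 1)
  calc QhatTerm Hterm k d β i s r u v
      ≤ (clustersFrom Hterm i (s + 1)).card * clusterCoeff k d β s r :=
        QhatTerm_apply_le_card_mul hβ s r u v
    _ ≤ ((s + 1).factorial * d ^ (s + 1) : ℝ) * clusterCoeff k d β s r := by
        gcongr
        exact clusterCoeff_nonneg hβ s r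
    _ ≤ 22 * k * (2 * α) ^ (s + 1 + r) := factorial_mul_pow_mul_clusterCoeff_le hβ hdβ hkβ s r
    _ = 22 * k * ((4 * α) ^ (s + 1 + r) * (1 / 2) ^ (s + 1 + r)) := by
        rw [← mul_pow]
        ring_nf
    _ ≤ 22 * k * ((4 * α) ^ N * (1 / 2) ^ (s + 1 + r)) := by
        gcongr 22 * k * (?_ * _)
        exact pow_le_pow_of_le_one (by positivity) hα hNsr
    _ = 11 * k * (4 * α) ^ N * ((1 / 2) ^ s * (1 / 2) ^ r) := by ring

theorem Qhat_apply_nonneg_and_le {N : ℕ} {u v : Fin n}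
    (hN : N ≤ max 1 (max (hamDist Hterm i u) (hamDist Hterm i v) - 1)) :
    0 ≤ Qhat Hterm k d β i u v ∧ Qhat Hterm k d β i u v ≤ 44 * k * (4 * α) ^ N := by
  rw [Qhat_eq_tsum_QhatTerm]
  have hα0 : 0 ≤ α := le_trans (by positivity) hkβ
  have hrow : ∀ s u v, 0 ≤ (∑' r, QhatTerm Hterm k d β i s r) u v ∧
      (∑' r, QhatTerm Hterm k d β i s r) u v
        ≤ 22 * k * (4 * α) ^ max 1 (max (hamDist Hterm i u) (hamDist Hterm i v) - 1)
          * (1 / 2) ^ s := by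
    intro s u v
    have := Matrix.tsum_apply_nonneg_and_le (QhatTerm_apply_nonneg hβ s)
      (b := fun u v r => 11 * k * (4 * α) ^ max 1 (max (hamDist Hterm i u) (hamDist Hterm i v) - 1)
        * (1 / 2) ^ s * (1 / 2) ^ r)
      (fun r u v => (QhatTerm_apply_le hdeg hβ hdβ hkβ hα le_rfl s r).trans_eq (by ring))
      (fun u v => summable_geometric_two.mul_left _) u v
    rw [tsum_mul_left, tsum_geometric_two] at this
    exact ⟨this.1, this.2.trans_eq (by ring)⟩
  have hQ := Matrix.tsum_apply_nonneg_and_le (fun s u v => (hrow s u v).1)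
    (fun s u v => (hrow s u v).2) (fun u v => summable_geometric_two.mul_left _) u v
  rw [tsum_mul_left, tsum_geometric_two] at hQ
  refine ⟨hQ.1, hQ.2.trans ?_⟩
  rw [mul_right_comm, mul_right_comm 22, show (22 : ℝ) * 2 = 44 by norm_num]
  gcongr 44 * k * ?_
  exact pow_le_pow_of_le_one (by positivity) hα hN

end Bounds

theorem quasi_locality_of_update_matrices_general
    (n m : ℕ) (Hterm : Fin m → QMat n)
    (k d : ℕ) (g : ℝ)
    (hdeg : ∀ a, (Finset.univ.filter fun b =>
        (supp (Hterm b) ∩ supp (Hterm a)).Nonempty).card ≤ d)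
    (hg1 : 1 ≤ g)
    (β : ℝ) (hβ0 : 0 < β)
    (hβ : β ≤ 1 / (100 * g * (k : ℝ) * ((d : ℝ) + 1)))
    (x y : Fin n → ℝ) (X Y : Finset (Fin n))
    (hxsupp : ∀ j ∉ X, x j = 0) (hysupp : ∀ j ∉ Y, y j = 0)
    (hx1 : ∑ j, |x j| = 1) (hy1 : ∑ j, |y j| = 1)
    (i : Fin n) :
    dotProduct y ((Qhat Hterm k d β i).mulVec x)
      ≤ 150 * (k : ℝ) * (25 * g * (k : ℝ) * ((d : ℝ) + 1) * β) ^
          (max 1 (max (distToSet Hterm i X) (distToSet Hterm i Y) - 1)) := by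
  -- `k = 0` would turn the hypothesis on `β` into `β ≤ 1 / 0 = 0`.
  have hk : (1 : ℝ) ≤ k := by
    rcases Nat.eq_zero_or_pos k with rfl | hk
    · simp at hβ; linarith
    · exact_mod_cast hk
  have hα : 100 * (g * k * ((d : ℝ) + 1) * β) ≤ 1 := by
    rw [le_div_iff₀ (by positivity)] at hβ
    linarith
  have hkβ : ((d : ℝ) + 1) * k * β ≤ g * k * ((d : ℝ) + 1) * β := by
    nlinarith [mul_nonneg (sub_nonneg.2 hg1) (by positivity : (0 : ℝ) ≤ ((d : ℝ) + 1) * k * β)]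
  have hdβ : d * β ≤ g * k * ((d : ℝ) + 1) * β := by
    nlinarith [mul_nonneg (sub_nonneg.2 hk) (by positivity : (0 : ℝ) ≤ ((d : ℝ) + 1) * β)]
  set E := max 1 (max (distToSet Hterm i X) (distToSet Hterm i Y) - 1)
  have hentry : ∀ u v, y u ≠ 0 → x v ≠ 0 →
      |Qhat Hterm k d β i u v| ≤ 150 * (k : ℝ) * (25 * g * (k : ℝ) * ((d : ℝ) + 1) * β) ^ E := by
    intro u v hyu hxv
    have hdX := distToSet_le_hamDist (Hterm := Hterm) (i := i) (by_contra (hxv <| hxsupp v ·))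
    have hdY := distToSet_le_hamDist (Hterm := Hterm) (i := i) (by_contra (hyu <| hysupp u ·))
    obtain ⟨hQ0, hQ⟩ := Qhat_apply_nonneg_and_le (i := i) (u := u) (v := v) (N := E)
      hdeg hβ0.le hdβ hkβ (by linarith) (by omega)
    rw [abs_of_nonneg hQ0]
    refine hQ.trans ?_
    gcongr ?_ * ?_ * ?_ ^ E
    · norm_num
    · linarith [(by positivity : (0 : ℝ) ≤ ((d : ℝ) + 1) * k * β)]
  calc dotProduct y ((Qhat Hterm k d β i).mulVec x)
      ≤ _ := Matrix.dotProduct_mulVec_le_of_abs_apply_le _ y x hentry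
    _ = _ := by rw [hx1, hy1, mul_one, mul_one]

/-- **Quasi-locality of the update matrices**: for unit-`ℓ₁` nonnegative vectors `x, y`
supported on `X, Y`, the bilinear form of `Q̂⁽ⁱ⁾` decays geometrically in
`max(dist(i,X), dist(i,Y))`. -/
theorem quasi_locality_of_update_matrices
    (n m : ℕ) (Hterm : Fin m → QMat n)
    (hherm : ∀ a, (Hterm a).IsHermitian)
    (hopnorm : ∀ a, opNorm (Hterm a) ≤ 1)
    (k d : ℕ) (g : ℝ)
    (hloc : ∀ a, (supp (Hterm a)).card ≤ k)
    (hd2 : 2 ≤ d)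
    (hdeg : ∀ a, (Finset.univ.filter fun b =>
        (supp (Hterm b) ∩ supp (Hterm a)).Nonempty).card ≤ d)
    (hg1 : 1 ≤ g)
    (hgrow : ∀ (i : Fin n) (r : ℕ), ((ballH Hterm i r).card : ℝ) ≤ g ^ r)
    (β : ℝ) (hβ0 : 0 < β)
    (hβ : β ≤ 1 / (100 * g * (k : ℝ) * ((d : ℝ) + 1)))
    (x y : Fin n → ℝ) (X Y : Finset (Fin n))
    (hxnn : ∀ j, 0 ≤ x j) (hynn : ∀ j, 0 ≤ y j)
    (hxsupp : ∀ j ∉ X, x j = 0) (hysupp : ∀ j ∉ Y, y j = 0)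
    (hx1 : ∑ j, |x j| = 1) (hy1 : ∑ j, |y j| = 1)
    (i : Fin n) :
    dotProduct y ((Qhat Hterm k d β i).mulVec x)
      ≤ 150 * (k : ℝ) * (25 * g * (k : ℝ) * ((d : ℝ) + 1) * β) ^
          (max 1 (max (distToSet Hterm i X) (distToSet Hterm i Y) - 1)) :=
  quasi_locality_of_update_matrices_general n m Hterm k d g hdeg hg1 β hβ0 hβ x y X Y hxsupp hysupp
    hx1 hy1 i
end
end

section
/- Convergence of a sum over paths: Let dist be a metric on [n] with polynomial growth parameter ν ≥ 1, i.e. |{j : dist(i,j) ≤ r}| ≤ (1+r)^ν for all i ∈ [n] and r ≥ 0. Then for every constant c ∈ (0,1), every ℓ ≥ 1, and all i_0, i_ℓ ∈ [n]: Σ_{i_1,…,i_{ℓ−1} ∈ [n]} c^{dist(i_ℓ,i_{ℓ−1}) + … + dist(i_1,i_0)} ≤ λ^{ℓ−1}·Σ_{j ≥ dist(i_ℓ,i_0)} (1+j)^ν·(√c)^j, where λ = (Σ_{x≥0}(1+x)^ν·(√c)^x)². In particular, for c < e^{−2ν}/1000, this sum is at most 1.1^ℓ·(e^ν·√c)^{dist(i_ℓ,i_0)}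 ≤ 1.1^ℓ/25^{dist(i_ℓ,i_0)}. -/
/-!
Put `s = √c`, so that `c ^ D = s ^ D * s ^ D` for the length `D` of a path from `i₀` to `i_ℓ`.
By the triangle inequality `D ≥ dist(i_ℓ, i₀)`, so one factor is at most `s ^ dist(i_ℓ, i₀)`;
the other, summed over paths, is the `(i_ℓ, i₀)` entry of `M ^ ℓ` for the matrix
`M i j = s ^ dist(i, j)`. Counting points by distance, polynomial growth bounds every row sum
of `M` by `μ = ∑ₓ (1 + x) ^ ν s ^ x`; as the entries of `M` are at most `1`, those of `M ^ ℓ`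
are at most `μ ^ (ℓ - 1)`. For small `c`, `(1 + x) ^ ν ≤ e ^ (ν x)` compares `μ` with a
geometric series of ratio `e ^ ν s < 1 / 25`.
-/

open Finset

theorem le_sum_steps_of_triangle {α M : Type*} [AddCommMonoid M] [PartialOrder M]
    [IsOrderedAddMonoid M] {d : α → α → M} (hrefl : ∀ i, d i i = 0)
    (htri : ∀ i j l, d i l ≤ d i j + d j l) :
    ∀ {m : ℕ} (f : Fin (m + 1) → α),
      d (f (Fin.last m)) (f 0) ≤ ∑ t : Fin m, d (f t.succ) (f t.castSucc)
  | 0, f => by simp [hrefl]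
  | m + 1, f => by
    have ih := le_sum_steps_of_triangle hrefl htri (Fin.tail f)
    simp only [Fin.tail, Fin.succ_last, Fin.succ_castSucc] at ih
    rw [Fin.sum_univ_succ, Fin.castSucc_zero]
    exact (htri _ _ _).trans ((add_le_add ih le_rfl).trans_eq (add_comm _ _))

namespace Matrix

variable {α R : Type*} [Fintype α] [DecidableEq α]

theorem dotProduct_pow_mulVec_eq_sum_paths [CommSemiring R] (M : Matrix α α R) (m : ℕ)
    (u v : α → R) :
    v ⬝ᵥ (M ^ m *ᵥ u) = ∑ f : Fin (m + 1) → α,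
      v (f (Fin.last m)) * (∏ t : Fin m, M (f t.succ) (f t.castSucc)) * u (f 0) := by
  induction m generalizing u with
  | zero =>
    rw [pow_zero, one_mulVec, ← (Equiv.funUnique (Fin 1) α).symm.sum_comp]
    simp [dotProduct]
  | succ m ih =>
    rw [pow_succ, ← mulVec_mulVec, ih]
    symm
    rw [← (Fin.consEquiv fun _ => α).sum_comp, Fintype.sum_prod_type, Finset.sum_comm]
    refine Finset.sum_congr rfl fun g _ => ?_
    simp only [Fin.consEquiv_apply, Fin.prod_univ_succ, ← Fin.succ_castSucc, Fin.cons_succ,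
      Fin.castSucc_zero, Fin.cons_zero, Fin.cons_last, mulVec, dotProduct, Finset.mul_sum]
    exact Finset.sum_congr rfl fun j _ => by ring

theorem pow_apply_eq_sum_paths [CommSemiring R] (M : Matrix α α R) (m : ℕ) (a b : α) :
    (M ^ m) b a = ∑ p : {f : Fin (m + 1) → α // f 0 = a ∧ f (Fin.last m) = b},
      ∏ t : Fin m, M (p.1 t.succ) (p.1 t.castSucc) := by
  have h := dotProduct_pow_mulVec_eq_sum_paths M m (Pi.single a 1) (Pi.single b 1)
  rw [mulVec_single_one, single_one_dotProduct] at h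
  calc (M ^ m) b a = ∑ f : Fin (m + 1) → α, if f 0 = a ∧ f (Fin.last m) = b then
        ∏ t : Fin m, M (f t.succ) (f t.castSucc) else 0 := by
        simpa [Pi.single_apply, ite_and] using h
    _ = _ := (Finset.sum_filter _ _).symm
    _ = _ := Finset.sum_subtype _ (by simp) _

theorem pow_apply_le_pow_pred [Semiring R] [PartialOrder R] [IsOrderedRing R] {M : Matrix α α R}
    {μ : R} (h0 : ∀ i j, 0 ≤ M i j) (h1 : ∀ i j, M i j ≤ 1) (hrow : ∀ i, ∑ j, M i j ≤ μ) :
    ∀ (m : ℕ) (i j : α), (M ^ m) i j ≤ μ ^ (m - 1)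
  | 0, i, j => by
    rw [pow_zero, one_apply]
    split_ifs <;> simp
  | 1, i, j => by simpa using h1 i j
  | m + 2, i, j => by
    have hμ : 0 ≤ μ := (Finset.sum_nonneg fun k _ => h0 i k).trans (hrow i)
    calc (M ^ (m + 2)) i j = ∑ k, M i k * (M ^ (m + 1)) k j := by rw [pow_succ', mul_apply]
      _ ≤ ∑ k, M i k * μ ^ m := by
        gcongr with k
        · exact h0 i k
        · exact pow_apply_le_pow_pred h0 h1 hrow (m + 1) k j
      _ = (∑ k, M i k) * μ ^ m := by rw [Finset.sum_mul]
      _ ≤ μ * μ ^ m := by gcongr; exact hrow i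
      _ = μ ^ (m + 2 - 1) := by rw [← pow_succ']; rfl

end Matrix

theorem sum_le_tsum_of_card_sublevel_le {β : Type*} [Fintype β] (d : β → ℕ) {g w : ℕ → ℝ}
    (hg : ∀ r, (#{j | d j ≤ r} : ℝ) ≤ g r) (hw : ∀ r, 0 ≤ w r)
    (hsum : Summable fun r => g r * w r) :
    ∑ j, w (d j) ≤ ∑' r, g r * w r := by
  have hfiber : ∀ r, (#{j | d j = r} : ℝ) ≤ g r := fun r =>
    le_trans (by gcongr with j; exact le_of_eq) (hg r)
  rw [Finset.sum_comp]
  calc ∑ r ∈ univ.image d, #{j | d j = r} • w r ≤ ∑ r ∈ univ.image d, g r * w r := by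
        gcongr with r
        rw [nsmul_eq_mul]
        exact mul_le_mul_of_nonneg_right (hfiber r) (hw r)
    _ ≤ ∑' r, g r * w r :=
        hsum.sum_le_tsum _ fun r _ => mul_nonneg ((Nat.cast_nonneg _).trans (hfiber r)) (hw r)

theorem summable_one_add_rpow_mul_pow (ν : ℝ) {s : ℝ} (hs0 : 0 < s) (hs1 : s < 1) :
    Summable fun x : ℕ => (1 + x : ℝ) ^ ν * s ^ x := by
  set k := ⌈ν⌉₊
  have hgeom : Summable fun x : ℕ => (x : ℝ) ^ k * s ^ x :=
    summable_pow_mul_geometric_of_norm_lt_one k (by rwa [Real.norm_of_nonneg hs0.le])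
  have hshift : Summable fun x : ℕ => ((x + 1 : ℕ) : ℝ) ^ k * s ^ (x + 1) :=
    (summable_nat_add_iff 1).2 hgeom
  have hk : Summable fun x : ℕ => (1 + x : ℝ) ^ k * s ^ x :=
    (summable_mul_left_iff hs0.ne').1 <| hshift.congr fun x => by push_cast; ring
  refine hk.of_nonneg_of_le (fun x => by positivity) fun x => ?_
  gcongr
  calc (1 + x : ℝ) ^ ν ≤ (1 + x : ℝ) ^ (k : ℝ) :=
        Real.rpow_le_rpow_of_exponent_le (by simp) (Nat.le_ceil ν)
    _ = (1 + x : ℝ) ^ k := Real.rpow_natCast _ _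

theorem one_add_rpow_le_exp_pow {ν : ℝ} (hν : 0 ≤ ν) (x : ℕ) :
    (1 + x : ℝ) ^ ν ≤ Real.exp ν ^ x := by
  calc (1 + x : ℝ) ^ ν ≤ Real.exp x ^ ν := by
        gcongr
        linarith [Real.add_one_le_exp (x : ℝ)]
    _ = Real.exp ν ^ x := by rw [← Real.exp_mul, ← Real.exp_nat_mul, mul_comm]

theorem tsum_one_add_rpow_mul_pow_le {ν s : ℝ} (hν : 0 ≤ ν) (hs0 : 0 ≤ s)
    (hq : Real.exp ν * s < 1) :
    ∑' x : ℕ, (1 + x : ℝ) ^ ν * s ^ x ≤ (1 - Real.exp ν * s)⁻¹ := by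
  have hle : ∀ x : ℕ, (1 + x : ℝ) ^ ν * s ^ x ≤ (Real.exp ν * s) ^ x := fun x => by
    rw [mul_pow]
    gcongr
    exact one_add_rpow_le_exp_pow hν x
  have hgeom := summable_geometric_of_lt_one (by positivity) hq
  rw [← tsum_geometric_of_lt_one (by positivity) hq]
  exact (hgeom.of_nonneg_of_le (fun x => by positivity) hle).tsum_le_tsum hle hgeom

theorem exp_mul_sqrt_lt {ν c : ℝ} (hc0 : 0 ≤ c) (hc : c < Real.exp (-2 * ν) / 1000) :
    Real.exp ν * √c < 1 / 25 := by
  refine lt_of_pow_lt_pow_left₀ 2 (by norm_num) ?_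
  calc (Real.exp ν * √c) ^ 2 = Real.exp (2 * ν) * c := by
        rw [mul_pow, Real.sq_sqrt hc0, ← Real.exp_nat_mul]; norm_num
    _ < Real.exp (2 * ν) * (Real.exp (-2 * ν) / 1000) := by gcongr
    _ < (1 / 25) ^ 2 := by
        rw [mul_div_assoc', ← Real.exp_add]; norm_num

theorem sum_paths_sq_pow_le {α : Type*} [Fintype α] [DecidableEq α] {d : α → α → ℕ}
    (hrefl : ∀ i, d i i = 0) (htri : ∀ i j l, d i l ≤ d i j + d j l) {s μ : ℝ} (hs0 : 0 ≤ s)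
    (hs1 : s ≤ 1) (hrow : ∀ i, ∑ j, s ^ d i j ≤ μ) (ℓ : ℕ) (a b : α) :
    ∑ p : {f : Fin (ℓ + 1) → α // f 0 = a ∧ f (Fin.last ℓ) = b},
        (s ^ 2) ^ (∑ t : Fin ℓ, d (p.1 t.succ) (p.1 t.castSucc))
      ≤ s ^ d b a * μ ^ (ℓ - 1) := by
  set M : Matrix α α ℝ := Matrix.of fun i j => s ^ d i j
  have hpath : ∀ p : {f : Fin (ℓ + 1) → α // f 0 = a ∧ f (Fin.last ℓ) = b},
      (s ^ 2) ^ (∑ t : Fin ℓ, d (p.1 t.succ) (p.1 t.castSucc))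
        ≤ s ^ d b a * ∏ t : Fin ℓ, M (p.1 t.succ) (p.1 t.castSucc) := by
    rintro ⟨f, hf0, hfl⟩
    have hlen := le_sum_steps_of_triangle hrefl htri f
    rw [hf0, hfl] at hlen
    simp only [M, Matrix.of_apply, Finset.prod_pow_eq_pow_sum, ← pow_mul, two_mul, pow_add]
    exact mul_le_mul_of_nonneg_right (pow_le_pow_of_le_one hs0 hs1 hlen) (by positivity)
  calc _ ≤ ∑ p : {f : Fin (ℓ + 1) → α // f 0 = a ∧ f (Fin.last ℓ) = b},
          s ^ d b a * ∏ t : Fin ℓ, M (p.1 t.succ) (p.1 t.castSucc) :=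
        Finset.sum_le_sum fun p _ => hpath p
    _ = s ^ d b a * (M ^ ℓ) b a := by rw [Matrix.pow_apply_eq_sum_paths, Finset.mul_sum]
    _ ≤ s ^ d b a * μ ^ (ℓ - 1) := by
        gcongr
        exact Matrix.pow_apply_le_pow_pred (fun i j => by positivity)
          (fun i j => pow_le_one₀ hs0 hs1) hrow ℓ b a

theorem le_tsum_ite_le {f : ℕ → ℝ} (hf : ∀ j, 0 ≤ f j) (hsum : Summable f) (k : ℕ) :
    f k ≤ ∑' j, if k ≤ j then f j else 0 := by
  have hnonneg : ∀ j, 0 ≤ if k ≤ j then f j else 0 := fun j => by split_ifs <;> simp [hf]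
  have hsum' : Summable fun j => if k ≤ j then f j else 0 :=
    hsum.of_nonneg_of_le hnonneg fun j => by split_ifs <;> simp [hf]
  simpa using hsum'.le_tsum k fun j _ => hnonneg j

theorem path_sum_convergence_general
    (n : ℕ) (dist : Fin n → Fin n → ℕ)
    (hrefl : ∀ i, dist i i = 0)
    (htri : ∀ i j l, dist i l ≤ dist i j + dist j l)
    (ν : ℝ) (hν : 1 ≤ ν)
    (hgrow : ∀ (i : Fin n) (r : ℕ),
      ((Finset.univ.filter fun j => dist i j ≤ r).card : ℝ) ≤ (1 + r : ℝ) ^ ν)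
    (c : ℝ) (hc0 : 0 < c) (hc1 : c < 1)
    (ℓ : ℕ) (i0 il : Fin n) :
    (∑ p : {f : Fin (ℓ + 1) → Fin n // f 0 = i0 ∧ f (Fin.last ℓ) = il},
        c ^ (∑ t : Fin ℓ, dist ((p : Fin (ℓ + 1) → Fin n) t.succ)
          ((p : Fin (ℓ + 1) → Fin n) t.castSucc)))
      ≤ ((∑' x : ℕ, (1 + x : ℝ) ^ ν * Real.sqrt c ^ x) ^ 2) ^ (ℓ - 1) *
          ∑' j : ℕ, (if dist il i0 ≤ j then (1 + j : ℝ) ^ ν * Real.sqrt c ^ j else 0) ∧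
    (c < Real.exp (-2 * ν) / 1000 →
      (∑ p : {f : Fin (ℓ + 1) → Fin n // f 0 = i0 ∧ f (Fin.last ℓ) = il},
          c ^ (∑ t : Fin ℓ, dist ((p : Fin (ℓ + 1) → Fin n) t.succ)
            ((p : Fin (ℓ + 1) → Fin n) t.castSucc)))
        ≤ (1.1 : ℝ) ^ ℓ * (Real.exp ν * Real.sqrt c) ^ dist il i0 ∧
      (1.1 : ℝ) ^ ℓ * (Real.exp ν * Real.sqrt c) ^ dist il i0
        ≤ (1.1 : ℝ) ^ ℓ / 25 ^ dist il i0) := by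
  have hν0 : 0 ≤ ν := zero_le_one.trans hν
  set s := √c
  have hs0 : 0 < s := Real.sqrt_pos.2 hc0
  have hs1 : s < 1 := (Real.sqrt_lt' one_pos).2 (by simpa using hc1)
  have hsum := summable_one_add_rpow_mul_pow ν hs0 hs1
  set μ := ∑' x : ℕ, (1 + x : ℝ) ^ ν * s ^ x
  have hμ : 1 ≤ μ := by simpa using hsum.le_tsum 0 fun x _ => by positivity
  have hpath : ∑ p : {f : Fin (ℓ + 1) → Fin n // f 0 = i0 ∧ f (Fin.last ℓ) = il},
      c ^ (∑ t : Fin ℓ, dist (p.1 t.succ) (p.1 t.castSucc)) ≤ s ^ dist il i0 * μ ^ (ℓ - 1) := by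
    rw [← Real.sq_sqrt hc0.le]
    exact sum_paths_sq_pow_le hrefl htri hs0.le hs1.le (fun i =>
      sum_le_tsum_of_card_sublevel_le (dist i) (hgrow i) (fun r => by positivity) hsum) ℓ i0 il
  refine ⟨hpath.trans ?_, fun hc => ?_⟩
  · have hT := le_tsum_ite_le (fun j => by positivity) hsum (dist il i0)
    rw [mul_comm]
    gcongr
    · exact le_self_pow₀ hμ two_ne_zero
    · exact le_mul_of_one_le_left (by positivity) (Real.one_le_rpow (by simp) hν0) |>.trans hT
  have hq := exp_mul_sqrt_lt hc0.le hc
  have hμ' : μ ≤ 1.1 := (tsum_one_add_rpow_mul_pow_le hν0 hs0.le (by linarith)).trans <| by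
    rw [inv_le_comm₀ (by linarith) (by norm_num)]
    linarith
  refine ⟨hpath.trans ?_, ?_⟩
  · rw [mul_comm]
    gcongr
    · exact (pow_le_pow_left₀ (by positivity) hμ' _).trans
        (pow_le_pow_right₀ (by norm_num) (Nat.sub_le ℓ 1))
    · exact le_mul_of_one_le_left hs0.le (Real.one_le_exp hν0)
  · rw [div_eq_mul_one_div, ← one_div_pow]
    gcongr

/-- **Convergence of a sum over paths**: for an `ℕ`-valued metric with polynomial growth
parameter `ν`, the sum over intermediate points `i₁, …, i_{ℓ−1}` of
`c^{dist(i_ℓ,i_{ℓ−1}) + ⋯ + dist(i₁,i₀)}` is at most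
`λ^{ℓ−1} Σ_{j ≥ dist(i_ℓ,i₀)} (1+j)^ν (√c)^j` with `λ = (Σ_{x≥0} (1+x)^ν (√c)^x)²`;
for `c < e^{−2ν}/1000` this is at most `1.1^ℓ (e^ν √c)^{dist(i_ℓ,i₀)} ≤ 1.1^ℓ/25^{dist}`. -/
theorem path_sum_convergence
    (n : ℕ) (dist : Fin n → Fin n → ℕ)
    (hrefl : ∀ i, dist i i = 0) (hzero : ∀ i j, dist i j = 0 → i = j)
    (hsymm : ∀ i j, dist i j = dist j i)
    (htri : ∀ i j l, dist i l ≤ dist i j + dist j l)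
    (ν : ℝ) (hν : 1 ≤ ν)
    (hgrow : ∀ (i : Fin n) (r : ℕ),
      ((Finset.univ.filter fun j => dist i j ≤ r).card : ℝ) ≤ (1 + r : ℝ) ^ ν)
    (c : ℝ) (hc0 : 0 < c) (hc1 : c < 1)
    (ℓ : ℕ) (hℓ : 1 ≤ ℓ) (i0 il : Fin n) :
    (∑ p : {f : Fin (ℓ + 1) → Fin n // f 0 = i0 ∧ f (Fin.last ℓ) = il},
        c ^ (∑ t : Fin ℓ, dist ((p : Fin (ℓ + 1) → Fin n) t.succ)
          ((p : Fin (ℓ + 1) → Fin n) t.castSucc)))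
      ≤ ((∑' x : ℕ, (1 + x : ℝ) ^ ν * Real.sqrt c ^ x) ^ 2) ^ (ℓ - 1) *
          ∑' j : ℕ, (if dist il i0 ≤ j then (1 + j : ℝ) ^ ν * Real.sqrt c ^ j else 0) ∧
    (c < Real.exp (-2 * ν) / 1000 →
      (∑ p : {f : Fin (ℓ + 1) → Fin n // f 0 = i0 ∧ f (Fin.last ℓ) = il},
          c ^ (∑ t : Fin ℓ, dist ((p : Fin (ℓ + 1) → Fin n) t.succ)
            ((p : Fin (ℓ + 1) → Fin n) t.castSucc)))
        ≤ (1.1 : ℝ) ^ ℓ * (Real.exp ν * Real.sqrt c) ^ dist il i0 ∧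
      (1.1 : ℝ) ^ ℓ * (Real.exp ν * Real.sqrt c) ^ dist il i0
        ≤ (1.1 : ℝ) ^ ℓ / 25 ^ dist il i0) :=
  path_sum_convergence_general n dist hrefl htri ν hν hgrow c hc0 hc1 ℓ i0 il
end
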